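/- arXiv:2505.07966 — 4 statements merged into one kernel-verified Lean document; each statement's English description precedes it below -/
import Mathlib

section
/- For every program of graded modal substitution calculus with global modality (GGMSC) of size n, there exists an equivalent GGMSC program in strong negation normal form (i.e., where the only negated subschemata are negated proposition symbols) of size O(n). -/
/-! ## Core: Kripke models, GGMSC schemata and programs -/

structure Kripke (W : Type) (P : Type) where
  R : W → W → Prop
  V : W → P → Prop

/-- Schemata of graded modal substitution calculus with the counting global
modality (GGMSC), over proposition symbols `P` and schema variables `T`.
`dia k` is `◇_{≥k}`, `box k` is `□_{<k}`, `gdia k` is `⟨E⟩_{≥k}` and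
`gbox k` is `[E]_{<k}`. -/
inductive Schema (P : Type) (T : Type) : Type where
  | bot | top
  | prop (p : P)
  | var (X : T)
  | neg (φ : Schema P T)
  | or (φ ψ : Schema P T)
  | and (φ ψ : Schema P T)
  | dia (k : ℕ) (φ : Schema P T)
  | box (k : ℕ) (φ : Schema P T)
  | gdia (k : ℕ) (φ : Schema P T)
  | gbox (k : ℕ) (φ : Schema P T)

/-- Formulae of graded modal logic with the counting global modality (GGML):
schemata with no schema variables. -/
abbrev GGFormula (P : Type) : Type := Schema P Empty

namespace Schema

def ofFormula {P T : Type} : GGFormula P → Schema P T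
  | .bot => .bot
  | .top => .top
  | .prop p => .prop p
  | .var X => X.elim
  | .neg φ => .neg (ofFormula φ)
  | .or φ ψ => .or (ofFormula φ) (ofFormula ψ)
  | .and φ ψ => .and (ofFormula φ) (ofFormula ψ)
  | .dia k φ => .dia k (ofFormula φ)
  | .box k φ => .box k (ofFormula φ)
  | .gdia k φ => .gdia k (ofFormula φ)
  | .gbox k φ => .gbox k (ofFormula φ)

/-- Truth of a `(P,T)`-schema in a Kripke model `M` at node `w`, where the
schema variables are interpreted by the labeling `g`. -/
def Sat {W P T : Type} (M : Kripke W P) (g : W → T → Prop) : W → Schema P T → Prop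
  | _, .bot => False
  | _, .top => True
  | w, .prop p => M.V w p
  | w, .var X => g w X
  | w, .neg φ => ¬ Sat M g w φ
  | w, .or φ ψ => Sat M g w φ ∨ Sat M g w ψ
  | w, .and φ ψ => Sat M g w φ ∧ Sat M g w ψ
  | w, .dia k φ => ∃ f : Fin k → W, Function.Injective f ∧ ∀ i, M.R w (f i) ∧ Sat M g (f i) φ
  | w, .box k φ => ¬ ∃ f : Fin k → W, Function.Injective f ∧ ∀ i, M.R w (f i) ∧ ¬ Sat M g (f i) φ
  | w, .gdia k φ => ∃ f : Fin k → W, Function.Injective f ∧ ∀ i, Sat M g (f i) φ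
  | w, .gbox k φ => ¬ ∃ f : Fin k → W, Function.Injective f ∧ ∀ i, ¬ Sat M g (f i) φ

/-- Size of a schema: the number of proposition symbols, schema variables,
negations and binary connectives, plus the counting thresholds of all
diamonds and boxes. -/
def size {P T : Type} : Schema P T → ℕ
  | .bot => 0
  | .top => 0
  | .prop _ => 1
  | .var _ => 1
  | .neg φ => size φ + 1
  | .or φ ψ => size φ + size ψ + 1
  | .and φ ψ => size φ + size ψ + 1
  | .dia k φ => size φ + k
  | .box k φ => size φ + k
  | .gdia k φ => size φ + k
  | .gbox k φ => size φ + k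

/-- Strong negation normal form: the only negated subschemata are negated
proposition symbols. -/
def SNNF {P T : Type} : Schema P T → Prop
  | .neg (.prop _) => True
  | .neg _ => False
  | .or φ ψ => SNNF φ ∧ SNNF ψ
  | .and φ ψ => SNNF φ ∧ SNNF ψ
  | .dia _ φ => SNNF φ
  | .box _ φ => SNNF φ
  | .gdia _ φ => SNNF φ
  | .gbox _ φ => SNNF φ
  | _ => True

/-- A schema of `MSC`: only non-graded local diamonds and boxes. -/
def IsMSC {P T : Type} : Schema P T → Prop
  | .neg φ => IsMSC φ
  | .or φ ψ => IsMSC φ ∧ IsMSC ψ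
  | .and φ ψ => IsMSC φ ∧ IsMSC ψ
  | .dia k φ => k = 1 ∧ IsMSC φ
  | .box k φ => k = 1 ∧ IsMSC φ
  | .gdia _ _ => False
  | .gbox _ _ => False
  | _ => True

/-- A schema of `SC`: no diamonds or boxes at all. -/
def IsSC {P T : Type} : Schema P T → Prop
  | .neg φ => IsSC φ
  | .or φ ψ => IsSC φ ∧ IsSC ψ
  | .and φ ψ => IsSC φ ∧ IsSC ψ
  | .dia _ _ => False
  | .box _ _ => False
  | .gdia _ _ => False
  | .gbox _ _ => False
  | _ => True

/-- Modal depth of a schema. -/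
def mdepth {P T : Type} : Schema P T → ℕ
  | .neg φ => mdepth φ
  | .or φ ψ => max (mdepth φ) (mdepth ψ)
  | .and φ ψ => max (mdepth φ) (mdepth ψ)
  | .dia _ φ => mdepth φ + 1
  | .box _ φ => mdepth φ + 1
  | .gdia _ φ => mdepth φ + 1
  | .gbox _ φ => mdepth φ + 1
  | _ => 0

end Schema

/-- A `(P,T)`-program of GGMSC: a base rule (a GGML formula) and an induction
rule (a schema) for each head predicate in `T`, together with a set of
accepting predicates. -/
structure Program (P : Type) (T : Type) where
  base : T → GGFormula P
  rule : T → Schema P T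
  acc : Set T

namespace Program

/-- `Λ.stage M n w X` holds iff `M, w ⊨ X^n`, i.e. the head predicate `X` is
true at `w` in round `n` of the run of `Λ` on `M`.  As a function of `w` and
`X` this is the global configuration of `Λ` in round `n`. -/
def stage {W P T : Type} (Λ : Program P T) (M : Kripke W P) : ℕ → W → T → Prop
  | 0 => fun w X => Schema.Sat M (fun _ (_ : T) => False) w (Schema.ofFormula (Λ.base X))
  | n + 1 => fun w X => Schema.Sat M (Λ.stage M n) w (Λ.rule X)

/-- `Λ` accepts the pointed model `(M,w)`: some accepting predicate becomes
true at `w` in some round. -/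
def Accepts {W P T : Type} (Λ : Program P T) (M : Kripke W P) (w : W) : Prop :=
  ∃ n : ℕ, ∃ X ∈ Λ.acc, Λ.stage M n w X

/-- The size of a program: the sum of the sizes of the bodies of all its rules. -/
def size {P T : Type} [Fintype T] (Λ : Program P T) : ℕ :=
  ∑ X : T, ((Λ.base X).size + (Λ.rule X).size)

/-- A program is in strong negation normal form if all the bodies of its rules are. -/
def SNNFP {P T : Type} (Λ : Program P T) : Prop :=
  ∀ X : T, (Λ.base X).SNNF ∧ (Λ.rule X).SNNF

/-- A program of `MSC`. -/
def IsMSCP {P T : Type} (Λ : Program P T) : Prop :=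
  ∀ X : T, (Λ.base X).IsMSC ∧ (Λ.rule X).IsMSC

/-- A program of `SC`. -/
def IsSCP {P T : Type} (Λ : Program P T) : Prop :=
  ∀ X : T, (Λ.base X).IsSC ∧ (Λ.rule X).IsSC

end Program

/-! Pushing negations inward dualises every connective and modality
(`◇_{≥k} ↔ □_{<k}`, `⟨E⟩_{≥k} ↔ [E]_{<k}`); this only fails at schema variables,
whose negation is not expressible in the schema. The program is therefore doubled:
next to each predicate `X` a dual predicate is computed that holds exactly where `X`
fails, and negative occurrences of `X` are replaced by it. Every rule body is
translated once per polarity, each time at most doubling in size. -/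

namespace Schema

variable {P T T' : Type}

/-- Negation normal form of `φ` (if `b = false`) or of `¬φ` (if `b = true`), where a
variable `X` reached under polarity `b` is renamed to `v b X`. -/
def nnf (v : Bool → T → T') : Bool → Schema P T → Schema P T'
  | b, .bot => bif b then .top else .bot
  | b, .top => bif b then .bot else .top
  | b, .prop p => bif b then .neg (.prop p) else .prop p
  | b, .var X => .var (v b X)
  | b, .neg φ => nnf v (!b) φ
  | b, .or φ ψ => bif b then .and (nnf v b φ) (nnf v b ψ) else .or (nnf v b φ) (nnf v b ψ)
  | b, .and φ ψ => bif b then .or (nnf v b φ) (nnf v b ψ) else .and (nnf v b φ) (nnf v b ψ)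
  | b, .dia k φ => bif b then .box k (nnf v b φ) else .dia k (nnf v b φ)
  | b, .box k φ => bif b then .dia k (nnf v b φ) else .box k (nnf v b φ)
  | b, .gdia k φ => bif b then .gbox k (nnf v b φ) else .gdia k (nnf v b φ)
  | b, .gbox k φ => bif b then .gdia k (nnf v b φ) else .gbox k (nnf v b φ)

theorem snnf_nnf (v : Bool → T → T') (b : Bool) (φ : Schema P T) : (nnf v b φ).SNNF := by
  induction φ generalizing b <;> cases b <;> simp_all [nnf, SNNF]

theorem size_nnf_le (v : Bool → T → T') (b : Bool) (φ : Schema P T) :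
    (nnf v b φ).size ≤ 2 * φ.size := by
  induction φ generalizing b with
  | neg φ ih => have := ih (!b); simp only [nnf, size]; omega
  | or φ ψ ihφ ihψ | and φ ψ ihφ ihψ =>
    have := ihφ b; have := ihψ b; cases b <;> simp only [nnf, cond, size] <;> omega
  | dia k φ ih | box k φ ih | gdia k φ ih | gbox k φ ih =>
    have := ih b; cases b <;> simp only [nnf, cond, size] <;> omega
  | _ => cases b <;> simp [nnf, size]

theorem sat_nnf {W : Type} (M : Kripke W P) {v : Bool → T → T'} {g : W → T → Prop}
    {g' : W → T' → Prop} (hv : ∀ w b X, g' w (v b X) ↔ bif b then ¬ g w X else g w X)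
    (b : Bool) (φ : Schema P T) (w : W) :
    Sat M g' w (nnf v b φ) ↔ bif b then ¬ Sat M g w φ else Sat M g w φ := by
  induction φ generalizing b w <;> cases b <;> simp_all [nnf, Sat, imp_iff_not_or]

theorem sat_nnf_of_isEmpty [IsEmpty T] {W : Type} (M : Kripke W P) (v : Bool → T → T')
    (g : W → T → Prop) (g' : W → T' → Prop) (b : Bool) (φ : Schema P T) (w : W) :
    Sat M g' w (nnf v b φ) ↔ bif b then ¬ Sat M g w φ else Sat M g w φ :=
  sat_nnf M (fun _ _ X => isEmptyElim X) b φ w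

theorem sat_ofFormula {W : Type} (M : Kripke W P) (g : W → T → Prop)
    (g₀ : W → Empty → Prop) (ψ : GGFormula P) (w : W) :
    Sat M g w (ofFormula ψ) ↔ Sat M g₀ w ψ := by
  induction ψ generalizing w with
  | var X => exact X.elim
  | _ => simp_all [ofFormula, Sat]

end Schema

namespace Program

variable {P T : Type}

def polarVar (b : Bool) (X : T) : T ⊕ T := bif b then .inr X else .inl X

/-- `inr X` is the dual of the predicate `inl X`. -/
def toSNNF (Λ : Program P T) : Program P (T ⊕ T) where
  base := Sum.elim (fun X => (Λ.base X).nnf (fun _ => id) false)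
    (fun X => (Λ.base X).nnf (fun _ => id) true)
  rule := Sum.elim (fun X => (Λ.rule X).nnf polarVar false)
    (fun X => (Λ.rule X).nnf polarVar true)
  acc := Sum.inl '' Λ.acc

theorem snnfP_toSNNF (Λ : Program P T) : Λ.toSNNF.SNNFP := by
  rintro (X | X) <;> exact ⟨Schema.snnf_nnf _ _ _, Schema.snnf_nnf _ _ _⟩

theorem size_toSNNF_le [Fintype T] (Λ : Program P T) : Λ.toSNNF.size ≤ 4 * Λ.size := by
  have hsize : ∀ (X : T) (b : Bool), ((Λ.base X).nnf (fun _ => id) b).size +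
      ((Λ.rule X).nnf polarVar b).size ≤ 2 * ((Λ.base X).size + (Λ.rule X).size) := fun X b => by
    have := Schema.size_nnf_le (fun _ => id) b (Λ.base X)
    have := Schema.size_nnf_le polarVar b (Λ.rule X)
    omega
  calc Λ.toSNNF.size
      = ∑ X : T, (((Λ.base X).nnf (fun _ => id) false).size +
          ((Λ.rule X).nnf polarVar false).size) +
        ∑ X : T, (((Λ.base X).nnf (fun _ => id) true).size +
          ((Λ.rule X).nnf polarVar true).size) := Fintype.sum_sum_type _
    _ ≤ ∑ X : T, 2 * ((Λ.base X).size + (Λ.rule X).size) +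
        ∑ X : T, 2 * ((Λ.base X).size + (Λ.rule X).size) :=
      add_le_add (Finset.sum_le_sum fun X _ => hsize X false) (Finset.sum_le_sum fun X _ => hsize X true)
    _ = 4 * Λ.size := by rw [size, ← Finset.mul_sum]; ring

theorem stage_toSNNF {W : Type} (Λ : Program P T) (M : Kripke W P) (n : ℕ) (w : W) (b : Bool)
    (X : T) :
    Λ.toSNNF.stage M n w (polarVar b X) ↔ bif b then ¬ Λ.stage M n w X else Λ.stage M n w X := by
  induction n generalizing w b X with
  | zero =>
    cases b <;>
      simp only [stage, polarVar, cond, toSNNF, Sum.elim_inl, Sum.elim_inr,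
        Schema.sat_ofFormula M _ (fun _ _ => False)] <;>
      exact Schema.sat_nnf_of_isEmpty M _ _ _ _ _ w
  | succ n ih =>
    cases b <;> simp only [stage, polarVar, cond, toSNNF, Sum.elim_inl, Sum.elim_inr] <;>
      exact Schema.sat_nnf M ih _ _ w

theorem accepts_toSNNF_iff {W : Type} (Λ : Program P T) (M : Kripke W P) (w : W) :
    Λ.toSNNF.Accepts M w ↔ Λ.Accepts M w := by
  constructor
  · rintro ⟨n, _, ⟨X, hX, rfl⟩, h⟩
    exact ⟨n, X, hX, (stage_toSNNF Λ M n w false X).1 h⟩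
  · rintro ⟨n, X, hX, h⟩
    exact ⟨n, .inl X, ⟨X, hX, rfl⟩, (stage_toSNNF Λ M n w false X).2 h⟩

end Program

/-- For every GGMSC program of size `n` there is an equivalent
GGMSC program in strong negation normal form of size `O(n)` (a single constant
`C` works uniformly for all programs). -/
theorem ggmsc_strong_negation_normal_form :
    ∃ C : ℕ, ∀ (P T : Type) (iT : Fintype T) (Λ : Program P T),
      ∃ (T' : Type) (iT' : Fintype T') (Λ' : Program P T'),
        Λ'.SNNFP ∧
        @Program.size P T' iT' Λ' ≤ C * @Program.size P T iT Λ + C ∧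
        ∀ (W : Type) (M : Kripke W P) (w : W), Λ.Accepts M w ↔ Λ'.Accepts M w :=
  ⟨4, fun _ _ _ Λ => ⟨_, inferInstance, Λ.toSNNF, Λ.snnfP_toSNNF,
    Λ.size_toSNNF_le.trans (Nat.le_add_right _ _),
    fun _ M w => (Λ.accepts_toSNNF_iff M w).symm⟩⟩
end

section
/- For each pointed Kripke model (M,w) over Π and each Π-program Λ of GGMSC, Λ accepts (M,w) under the compositional (iteration) semantics if and only if Eloise has a winning strategy in the semantic game 𝒢(M,w,Λ). -/
/-! ## The semantic game 𝒢(M,w,Λ) for GGMSC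

A position `(V, v, φ, ℓ)` of the game is encoded by `(b, v, φ, ℓ)` where
`b = true` iff Eloise is the current verifier.  `EloiseWins Λ M b v φ ℓ`
says that Eloise has a winning strategy in the semantic game from this
position.  Since every play of the semantic game is finite, the inductive
definition below captures exactly the existence of a winning strategy. -/
inductive EloiseWins {W P T : Type} (Λ : Program P T) (M : Kripke W P) :
    Bool → W → Schema P T → ℕ → Prop where
  | top_v (w : W) (ℓ : ℕ) : EloiseWins Λ M true w .top ℓ
  | bot_f (w : W) (ℓ : ℕ) : EloiseWins Λ M false w .bot ℓ
  | prop_v (w : W) (p : P) (ℓ : ℕ) (h : M.V w p) : EloiseWins Λ M true w (.prop p) ℓ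
  | prop_f (w : W) (p : P) (ℓ : ℕ) (h : ¬ M.V w p) : EloiseWins Λ M false w (.prop p) ℓ
  | neg (b : Bool) (w : W) (φ : Schema P T) (ℓ : ℕ) (h : EloiseWins Λ M (!b) w φ ℓ) :
      EloiseWins Λ M b w (.neg φ) ℓ
  | and_v (w : W) (φ ψ : Schema P T) (ℓ : ℕ)
      (h1 : EloiseWins Λ M true w φ ℓ) (h2 : EloiseWins Λ M true w ψ ℓ) :
      EloiseWins Λ M true w (.and φ ψ) ℓ
  | and_f_left (w : W) (φ ψ : Schema P T) (ℓ : ℕ) (h : EloiseWins Λ M false w φ ℓ) :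
      EloiseWins Λ M false w (.and φ ψ) ℓ
  | and_f_right (w : W) (φ ψ : Schema P T) (ℓ : ℕ) (h : EloiseWins Λ M false w ψ ℓ) :
      EloiseWins Λ M false w (.and φ ψ) ℓ
  | or_v_left (w : W) (φ ψ : Schema P T) (ℓ : ℕ) (h : EloiseWins Λ M true w φ ℓ) :
      EloiseWins Λ M true w (.or φ ψ) ℓ
  | or_v_right (w : W) (φ ψ : Schema P T) (ℓ : ℕ) (h : EloiseWins Λ M true w ψ ℓ) :
      EloiseWins Λ M true w (.or φ ψ) ℓ
  | or_f (w : W) (φ ψ : Schema P T) (ℓ : ℕ)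
      (h1 : EloiseWins Λ M false w φ ℓ) (h2 : EloiseWins Λ M false w ψ ℓ) :
      EloiseWins Λ M false w (.or φ ψ) ℓ
  | dia_v (w : W) (k : ℕ) (φ : Schema P T) (ℓ : ℕ) (f : Fin k → W)
      (hinj : Function.Injective f) (hR : ∀ i, M.R w (f i))
      (h : ∀ i, EloiseWins Λ M true (f i) φ ℓ) : EloiseWins Λ M true w (.dia k φ) ℓ
  | dia_f (w : W) (k : ℕ) (φ : Schema P T) (ℓ : ℕ) (sel : (Fin k → W) → Fin k)
      (h : ∀ f : Fin k → W, Function.Injective f → (∀ i, M.R w (f i)) →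
        EloiseWins Λ M false (f (sel f)) φ ℓ) : EloiseWins Λ M false w (.dia k φ) ℓ
  | box_v (w : W) (k : ℕ) (φ : Schema P T) (ℓ : ℕ) (sel : (Fin k → W) → Fin k)
      (h : ∀ f : Fin k → W, Function.Injective f → (∀ i, M.R w (f i)) →
        EloiseWins Λ M true (f (sel f)) φ ℓ) : EloiseWins Λ M true w (.box k φ) ℓ
  | box_f (w : W) (k : ℕ) (φ : Schema P T) (ℓ : ℕ) (f : Fin k → W)
      (hinj : Function.Injective f) (hR : ∀ i, M.R w (f i))
      (h : ∀ i, EloiseWins Λ M false (f i) φ ℓ) : EloiseWins Λ M false w (.box k φ) ℓ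
  | gdia_v (w : W) (k : ℕ) (φ : Schema P T) (ℓ : ℕ) (f : Fin k → W)
      (hinj : Function.Injective f)
      (h : ∀ i, EloiseWins Λ M true (f i) φ ℓ) : EloiseWins Λ M true w (.gdia k φ) ℓ
  | gdia_f (w : W) (k : ℕ) (φ : Schema P T) (ℓ : ℕ) (sel : (Fin k → W) → Fin k)
      (h : ∀ f : Fin k → W, Function.Injective f →
        EloiseWins Λ M false (f (sel f)) φ ℓ) : EloiseWins Λ M false w (.gdia k φ) ℓ
  | gbox_v (w : W) (k : ℕ) (φ : Schema P T) (ℓ : ℕ) (sel : (Fin k → W) → Fin k)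
      (h : ∀ f : Fin k → W, Function.Injective f →
        EloiseWins Λ M true (f (sel f)) φ ℓ) : EloiseWins Λ M true w (.gbox k φ) ℓ
  | gbox_f (w : W) (k : ℕ) (φ : Schema P T) (ℓ : ℕ) (f : Fin k → W)
      (hinj : Function.Injective f)
      (h : ∀ i, EloiseWins Λ M false (f i) φ ℓ) : EloiseWins Λ M false w (.gbox k φ) ℓ
  | var_succ (b : Bool) (w : W) (X : T) (ℓ : ℕ)
      (h : EloiseWins Λ M b w (Λ.rule X) ℓ) : EloiseWins Λ M b w (.var X) (ℓ + 1)
  | var_zero (b : Bool) (w : W) (X : T)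
      (h : EloiseWins Λ M b w (Schema.ofFormula (Λ.base X)) 0) :
      EloiseWins Λ M b w (.var X) 0

/-- Eloise has a winning strategy in the semantic game `𝒢(M,w,Λ)`: she can
pick an initial position `(Eloise, w, φ, k)` where `φ` is the body of the base
rule or of the induction rule of an accepting predicate, and win from it. -/
def EloiseWinsGame {W P T : Type} (Λ : Program P T) (M : Kripke W P) (w : W) : Prop :=
  ∃ X ∈ Λ.acc, ∃ k : ℕ,
    EloiseWins Λ M true w (Schema.ofFormula (Λ.base X)) k ∨
    EloiseWins Λ M true w (Λ.rule X) k

/-! Eloise wins from a position `(V, v, φ, ℓ)` exactly when the truth value of `φ` at `v`,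
with the schema variables read off the configuration of round `ℓ`, says that she is the
verifier.  Soundness is an induction on her winning strategy.  Completeness is an induction
on `ℓ` and then on `φ`: the verifier's choices are the witnesses of truth, and the falsifier's
choice of one of `k` distinct nodes that fails `φ` exists (by choice) because no such
`k`-tuple makes `φ` hold everywhere.  Base rule bodies are variable-free, so their truth does
not depend on the labeling, which lets Eloise open the game with any counter. -/

namespace Schema

variable {W P T : Type} (M : Kripke W P)

theorem sat_ofFormula_congr (g g' : W → T → Prop) (ψ : GGFormula P) (w : W) :
    Sat M g w (ofFormula ψ) ↔ Sat M g' w (ofFormula ψ) := by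
  induction ψ generalizing w with
  | var X => exact X.elim
  | bot | top | prop => rfl
  | neg _ ih | dia _ _ ih | box _ _ ih | gdia _ _ ih | gbox _ _ ih =>
      simp only [ofFormula, Sat, ih]
  | or _ _ ih₁ ih₂ | and _ _ ih₁ ih₂ => simp only [ofFormula, Sat, ih₁, ih₂]

end Schema

section Soundness

variable {W P T : Type} {Λ : Program P T} {M : Kripke W P}

theorem EloiseWins.sat_stage_iff {b : Bool} {w : W} {φ : Schema P T} {ℓ : ℕ}
    (h : EloiseWins Λ M b w φ ℓ) : Schema.Sat M (Λ.stage M ℓ) w φ ↔ b = true := by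
  induction h with
  | top_v | bot_f => simp [Schema.Sat]
  | prop_v _ _ _ h | prop_f _ _ _ h => simpa [Schema.Sat] using h
  | neg b _ _ _ _ ih => cases b <;> simp_all [Schema.Sat]
  | and_v | and_f_left | and_f_right | or_v_left | or_v_right | or_f => simp_all [Schema.Sat]
  | dia_v _ _ _ _ f hinj hR _ ih =>
      simp only [Schema.Sat, iff_true]
      exact ⟨f, hinj, fun i => ⟨hR i, (ih i).2 rfl⟩⟩
  | dia_f _ _ _ _ sel _ ih =>
      simp only [Schema.Sat, Bool.false_eq_true, iff_false]
      exact fun ⟨f, hinj, hf⟩ =>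
        Bool.false_ne_true ((ih f hinj fun i => (hf i).1).1 (hf (sel f)).2)
  | box_v _ _ _ _ sel _ ih =>
      simp only [Schema.Sat, iff_true]
      exact fun ⟨f, hinj, hf⟩ => (hf (sel f)).2 ((ih f hinj fun i => (hf i).1).2 rfl)
  | box_f _ _ _ _ f hinj hR _ ih =>
      simp only [Schema.Sat, Bool.false_eq_true, iff_false, not_not]
      exact ⟨f, hinj, fun i => ⟨hR i, fun hs => Bool.false_ne_true ((ih i).1 hs)⟩⟩
  | gdia_v _ _ _ _ f hinj _ ih =>
      simp only [Schema.Sat, iff_true]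
      exact ⟨f, hinj, fun i => (ih i).2 rfl⟩
  | gdia_f _ _ _ _ sel _ ih =>
      simp only [Schema.Sat, Bool.false_eq_true, iff_false]
      exact fun ⟨f, hinj, hf⟩ => Bool.false_ne_true ((ih f hinj).1 (hf (sel f)))
  | gbox_v _ _ _ _ sel _ ih =>
      simp only [Schema.Sat, iff_true]
      exact fun ⟨f, hinj, hf⟩ => hf (sel f) ((ih f hinj).2 rfl)
  | gbox_f _ _ _ _ f hinj _ ih =>
      simp only [Schema.Sat, Bool.false_eq_true, iff_false, not_not]
      exact ⟨f, hinj, fun i hs => Bool.false_ne_true ((ih i).1 hs)⟩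
  | var_succ _ _ _ _ _ ih => exact ih
  | var_zero _ w X _ ih =>
      exact (Schema.sat_ofFormula_congr M (fun _ _ => False) _ (Λ.base X) w).trans ih

end Soundness

section Completeness

variable {W P T : Type} {Λ : Program P T} {M : Kripke W P} {g : W → T → Prop} {ℓ : ℕ}

theorem exists_selector {k : ℕ} {p r : W → Prop}
    (h : ∀ f : Fin k → W, Function.Injective f → (∀ i, p (f i)) → ∃ i, r (f i)) :
    ∃ sel : (Fin k → W) → Fin k,
      ∀ f, Function.Injective f → (∀ i, p (f i)) → r (f (sel f)) := by
  have : Nonempty (Fin k) := by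
    cases k with
    | zero => exact ⟨(h Fin.elim0 (fun a => a.elim0) fun i => i.elim0).choose⟩
    | succ k => exact ⟨0⟩
  have hsel (f : Fin k → W) : ∃ i, Function.Injective f → (∀ i, p (f i)) → r (f i) := by
    by_cases hf : Function.Injective f ∧ ∀ i, p (f i)
    · obtain ⟨i, hi⟩ := h f hf.1 hf.2
      exact ⟨i, fun _ _ => hi⟩
    · exact ⟨Classical.arbitrary _, fun hinj hp => absurd ⟨hinj, hp⟩ hf⟩
  choose sel hsel using hsel
  exact ⟨sel, hsel⟩

variable (Λ M g ℓ) in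
def GameMatchesSat (φ : Schema P T) : Prop :=
  ∀ w, (Schema.Sat M g w φ → EloiseWins Λ M true w φ ℓ) ∧
    (¬ Schema.Sat M g w φ → EloiseWins Λ M false w φ ℓ)

theorem gameMatchesSat_bot : GameMatchesSat Λ M g ℓ .bot :=
  fun w => ⟨False.elim, fun _ => .bot_f w ℓ⟩

theorem gameMatchesSat_top : GameMatchesSat Λ M g ℓ .top :=
  fun w => ⟨fun _ => .top_v w ℓ, fun h => absurd trivial h⟩

theorem gameMatchesSat_prop (p : P) : GameMatchesSat Λ M g ℓ (.prop p) :=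
  fun w => ⟨.prop_v w p ℓ, .prop_f w p ℓ⟩

namespace GameMatchesSat

variable {φ ψ : Schema P T}

theorem neg (h : GameMatchesSat Λ M g ℓ φ) : GameMatchesSat Λ M g ℓ (.neg φ) :=
  fun w => ⟨fun hs => .neg true w φ ℓ ((h w).2 hs),
    fun hs => .neg false w φ ℓ ((h w).1 (not_not.mp hs))⟩

theorem or (hφ : GameMatchesSat Λ M g ℓ φ) (hψ : GameMatchesSat Λ M g ℓ ψ) :
    GameMatchesSat Λ M g ℓ (.or φ ψ) := by
  refine fun w => ⟨?_, fun hs => ?_⟩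
  · rintro (hs | hs)
    · exact .or_v_left w φ ψ ℓ ((hφ w).1 hs)
    · exact .or_v_right w φ ψ ℓ ((hψ w).1 hs)
  · obtain ⟨hsφ, hsψ⟩ := not_or.mp hs
    exact .or_f w φ ψ ℓ ((hφ w).2 hsφ) ((hψ w).2 hsψ)

theorem and (hφ : GameMatchesSat Λ M g ℓ φ) (hψ : GameMatchesSat Λ M g ℓ ψ) :
    GameMatchesSat Λ M g ℓ (.and φ ψ) := by
  refine fun w =>
    ⟨fun ⟨hsφ, hsψ⟩ => .and_v w φ ψ ℓ ((hφ w).1 hsφ) ((hψ w).1 hsψ), fun hs => ?_⟩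
  by_cases hsφ : Schema.Sat M g w φ
  · exact .and_f_right w φ ψ ℓ ((hψ w).2 fun hsψ => hs ⟨hsφ, hsψ⟩)
  · exact .and_f_left w φ ψ ℓ ((hφ w).2 hsφ)

theorem dia (k : ℕ) (h : GameMatchesSat Λ M g ℓ φ) :
    GameMatchesSat Λ M g ℓ (.dia k φ) := by
  refine fun w => ⟨fun ⟨f, hinj, hf⟩ => ?_, fun hs => ?_⟩
  · exact .dia_v w k φ ℓ f hinj (fun i => (hf i).1) fun i => (h (f i)).1 (hf i).2
  · obtain ⟨sel, hsel⟩ := exists_selector (p := M.R w) (r := fun v => ¬ Schema.Sat M g v φ)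
      fun f hinj hR => by
        by_contra! hf
        exact hs ⟨f, hinj, fun i => ⟨hR i, hf i⟩⟩
    exact .dia_f w k φ ℓ sel fun f hinj hR => (h _).2 (hsel f hinj hR)

theorem box (k : ℕ) (h : GameMatchesSat Λ M g ℓ φ) :
    GameMatchesSat Λ M g ℓ (.box k φ) := by
  refine fun w => ⟨fun hs => ?_, fun hs => ?_⟩
  · obtain ⟨sel, hsel⟩ := exists_selector (p := M.R w) (r := fun v => Schema.Sat M g v φ)
      fun f hinj hR => by
        by_contra! hf
        exact hs ⟨f, hinj, fun i => ⟨hR i, hf i⟩⟩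
    exact .box_v w k φ ℓ sel fun f hinj hR => (h _).1 (hsel f hinj hR)
  · obtain ⟨f, hinj, hf⟩ := not_not.mp hs
    exact .box_f w k φ ℓ f hinj (fun i => (hf i).1) fun i => (h (f i)).2 (hf i).2

theorem gdia (k : ℕ) (h : GameMatchesSat Λ M g ℓ φ) :
    GameMatchesSat Λ M g ℓ (.gdia k φ) := by
  refine fun w => ⟨fun ⟨f, hinj, hf⟩ => ?_, fun hs => ?_⟩
  · exact .gdia_v w k φ ℓ f hinj fun i => (h (f i)).1 (hf i)
  · obtain ⟨sel, hsel⟩ := exists_selector (p := fun _ => True)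
      (r := fun v => ¬ Schema.Sat M g v φ) fun f hinj _ => by
        by_contra! hf
        exact hs ⟨f, hinj, hf⟩
    exact .gdia_f w k φ ℓ sel fun f hinj => (h _).2 (hsel f hinj fun _ => trivial)

theorem gbox (k : ℕ) (h : GameMatchesSat Λ M g ℓ φ) :
    GameMatchesSat Λ M g ℓ (.gbox k φ) := by
  refine fun w => ⟨fun hs => ?_, fun hs => ?_⟩
  · obtain ⟨sel, hsel⟩ := exists_selector (p := fun _ => True)
      (r := fun v => Schema.Sat M g v φ) fun f hinj _ => by
        by_contra! hf
        exact hs ⟨f, hinj, hf⟩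
    exact .gbox_v w k φ ℓ sel fun f hinj => (h _).1 (hsel f hinj fun _ => trivial)
  · obtain ⟨f, hinj, hf⟩ := not_not.mp hs
    exact .gbox_f w k φ ℓ f hinj fun i => (h (f i)).2 (hf i)

end GameMatchesSat

theorem gameMatchesSat_of_var (hvar : ∀ X, GameMatchesSat Λ M g ℓ (.var X)) :
    ∀ φ : Schema P T, GameMatchesSat Λ M g ℓ φ
  | .bot => gameMatchesSat_bot
  | .top => gameMatchesSat_top
  | .prop p => gameMatchesSat_prop p
  | .var X => hvar X
  | .neg φ => (gameMatchesSat_of_var hvar φ).neg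
  | .or φ ψ => (gameMatchesSat_of_var hvar φ).or (gameMatchesSat_of_var hvar ψ)
  | .and φ ψ => (gameMatchesSat_of_var hvar φ).and (gameMatchesSat_of_var hvar ψ)
  | .dia k φ => (gameMatchesSat_of_var hvar φ).dia k
  | .box k φ => (gameMatchesSat_of_var hvar φ).box k
  | .gdia k φ => (gameMatchesSat_of_var hvar φ).gdia k
  | .gbox k φ => (gameMatchesSat_of_var hvar φ).gbox k

theorem gameMatchesSat_ofFormula :
    ∀ ψ : GGFormula P, GameMatchesSat Λ M g ℓ (Schema.ofFormula ψ)
  | .bot => gameMatchesSat_bot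
  | .top => gameMatchesSat_top
  | .prop p => gameMatchesSat_prop p
  | .var X => X.elim
  | .neg φ => (gameMatchesSat_ofFormula φ).neg
  | .or φ ψ => (gameMatchesSat_ofFormula φ).or (gameMatchesSat_ofFormula ψ)
  | .and φ ψ => (gameMatchesSat_ofFormula φ).and (gameMatchesSat_ofFormula ψ)
  | .dia k φ => (gameMatchesSat_ofFormula φ).dia k
  | .box k φ => (gameMatchesSat_ofFormula φ).box k
  | .gdia k φ => (gameMatchesSat_ofFormula φ).gdia k
  | .gbox k φ => (gameMatchesSat_ofFormula φ).gbox k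

theorem gameMatchesSat_stage :
    ∀ (ℓ : ℕ) (φ : Schema P T), GameMatchesSat Λ M (Λ.stage M ℓ) ℓ φ
  | 0 => gameMatchesSat_of_var fun X w =>
      ⟨fun h => .var_zero true w X ((gameMatchesSat_ofFormula (Λ.base X) w).1 h),
        fun h => .var_zero false w X ((gameMatchesSat_ofFormula (Λ.base X) w).2 h)⟩
  | ℓ + 1 => gameMatchesSat_of_var fun X w =>
      ⟨fun h => .var_succ true w X ℓ ((gameMatchesSat_stage ℓ (Λ.rule X) w).1 h),
        fun h => .var_succ false w X ℓ ((gameMatchesSat_stage ℓ (Λ.rule X) w).2 h)⟩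

end Completeness

/-- For each pointed Kripke model `(M,w)` and each GGMSC
program `Λ`, `Λ` accepts `(M,w)` under the compositional iteration semantics
iff Eloise has a winning strategy in the semantic game `𝒢(M,w,Λ)`. -/
theorem ggmsc_semantic_game_correct {W P T : Type} (Λ : Program P T)
    (M : Kripke W P) (w : W) :
    Λ.Accepts M w ↔ EloiseWinsGame Λ M w := by
  constructor
  · rintro ⟨n, X, hX, hn⟩
    refine ⟨X, hX, ?_⟩
    cases n with
    | zero => exact ⟨0, .inl ((gameMatchesSat_ofFormula (Λ.base X) w).1 hn)⟩
    | succ n => exact ⟨n, .inr ((gameMatchesSat_stage n (Λ.rule X) w).1 hn)⟩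
  · rintro ⟨X, hX, k, h | h⟩
    · exact ⟨0, X, hX, (Schema.sat_ofFormula_congr M _ _ _ w).1 (h.sat_stage_iff.2 rfl)⟩
    · exact ⟨k + 1, X, hX, h.sat_stage_iff.2 rfl⟩
end

section
/- The key inductive lemma for semantic game correctness: for every subschema ψ of a GGMSC program Λ, every pointed model (M,w) and every k∈ℕ, M,w ⊨ ψ^k (the k-th iterated formula of ψ) if and only if Eloise has a winning strategy in the semantic game 𝒢(M,w,Λ) starting from the position (Eloise, w, ψ, k). -/
/-!
Both roles are handled at once: Eloise wins from `(b, v, ψ, k)` iff the truth value of `ψ^k` at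
`v` is `b`. This is proved by induction on `k` and, inside, on `ψ`. A variable position with
counter `k + 1` moves to the rule body with counter `k`, which is the outer induction hypothesis;
with counter `0` it moves to a base-rule body, which has no variables. At a counting modality the
player who picks one element of the opponent's tuple has a winning choice function iff no
admissible tuple defeats every choice, by the axiom of choice.
-/

namespace Schema

variable {P T : Type}

def vars : Schema P T → Set T
  | .var X => {X}
  | .neg φ | .dia _ φ | .box _ φ | .gdia _ φ | .gbox _ φ => vars φ
  | .or φ ψ | .and φ ψ => vars φ ∪ vars ψ
  | .bot | .top | .prop _ => ∅

@[simp]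
theorem vars_ofFormula (φ : GGFormula P) : (ofFormula φ : Schema P T).vars = ∅ := by
  induction φ with
  | var X => exact X.elim
  | _ => simp_all [ofFormula, vars]

end Schema

theorem exists_selector_iff_not_exists {ι α : Type*} (C : (ι → α) → Prop) (Q : α → Prop)
    (hC : IsEmpty ι → ∀ f, C f) :
    (∃ sel : (ι → α) → ι, ∀ f, C f → Q (f (sel f))) ↔ ¬∃ f, C f ∧ ∀ i, ¬Q (f i) := by
  refine ⟨fun ⟨sel, h⟩ ⟨f, hf, hQ⟩ => hQ _ (h f hf), fun h => ?_⟩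
  push Not at h
  obtain ⟨i₀⟩ : Nonempty ι := (isEmpty_or_nonempty ι).elim
    (fun hι => ⟨(h isEmptyElim (hC hι _)).choose⟩) id
  classical
  exact ⟨fun f => if hf : C f then (h f hf).choose else i₀,
    fun f hf => by simpa [hf] using (h f hf).choose_spec⟩

section Game

variable {W P T : Type} {Λ : Program P T} {M : Kripke W P} {b : Bool} {w : W}
  {φ ψ : Schema P T} {ℓ k : ℕ}

open Function

theorem eloiseWins_top_iff : EloiseWins Λ M b w .top ℓ ↔ b = true :=
  ⟨by rintro ⟨⟩; rfl, by rintro rfl; exact .top_v w ℓ⟩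

theorem eloiseWins_bot_iff : EloiseWins Λ M b w .bot ℓ ↔ b = false :=
  ⟨by rintro ⟨⟩; rfl, by rintro rfl; exact .bot_f w ℓ⟩

theorem eloiseWins_prop_iff {p : P} : EloiseWins Λ M b w (.prop p) ℓ ↔ (M.V w p ↔ b = true) := by
  constructor
  · rintro (⟨_, _, _, h⟩ | ⟨_, _, _, h⟩) <;> simpa
  · cases b <;> simp only [Bool.false_eq_true, iff_false, iff_true]
    exacts [.prop_f w p ℓ, .prop_v w p ℓ]

theorem eloiseWins_neg_iff : EloiseWins Λ M b w (.neg φ) ℓ ↔ EloiseWins Λ M (!b) w φ ℓ :=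
  ⟨by rintro ⟨⟩; assumption, .neg b w φ ℓ⟩

theorem eloiseWins_var_zero_iff {X : T} :
    EloiseWins Λ M b w (.var X) 0 ↔ EloiseWins Λ M b w (.ofFormula (Λ.base X)) 0 :=
  ⟨by rintro ⟨⟩; assumption, .var_zero b w X⟩

theorem eloiseWins_var_succ_iff {X : T} :
    EloiseWins Λ M b w (.var X) (ℓ + 1) ↔ EloiseWins Λ M b w (Λ.rule X) ℓ :=
  ⟨by rintro ⟨⟩; assumption, .var_succ b w X ℓ⟩

theorem eloiseWins_true_and_iff :
    EloiseWins Λ M true w (.and φ ψ) ℓ ↔ EloiseWins Λ M true w φ ℓ ∧ EloiseWins Λ M true w ψ ℓ :=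
  ⟨by rintro ⟨⟩; constructor <;> assumption, fun h => .and_v w φ ψ ℓ h.1 h.2⟩

theorem eloiseWins_false_and_iff :
    EloiseWins Λ M false w (.and φ ψ) ℓ ↔
      EloiseWins Λ M false w φ ℓ ∨ EloiseWins Λ M false w ψ ℓ :=
  ⟨by rintro ⟨⟩ <;> simp_all, (·.elim (.and_f_left w φ ψ ℓ) (.and_f_right w φ ψ ℓ))⟩

theorem eloiseWins_true_or_iff :
    EloiseWins Λ M true w (.or φ ψ) ℓ ↔ EloiseWins Λ M true w φ ℓ ∨ EloiseWins Λ M true w ψ ℓ :=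
  ⟨by rintro ⟨⟩ <;> simp_all, (·.elim (.or_v_left w φ ψ ℓ) (.or_v_right w φ ψ ℓ))⟩

theorem eloiseWins_false_or_iff :
    EloiseWins Λ M false w (.or φ ψ) ℓ ↔
      EloiseWins Λ M false w φ ℓ ∧ EloiseWins Λ M false w ψ ℓ :=
  ⟨by rintro ⟨⟩; constructor <;> assumption, fun h => .or_f w φ ψ ℓ h.1 h.2⟩

theorem eloiseWins_true_dia_iff :
    EloiseWins Λ M true w (.dia k φ) ℓ ↔ ∃ f : Fin k → W,
      (Injective f ∧ ∀ i, M.R w (f i)) ∧ ∀ i, EloiseWins Λ M true (f i) φ ℓ :=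
  ⟨by rintro ⟨⟩; exact ⟨_, ⟨‹_›, ‹_›⟩, ‹_›⟩, fun ⟨f, ⟨hf, hR⟩, h⟩ => .dia_v w k φ ℓ f hf hR h⟩

theorem eloiseWins_false_dia_iff :
    EloiseWins Λ M false w (.dia k φ) ℓ ↔ ∃ sel : (Fin k → W) → Fin k, ∀ f,
      (Injective f ∧ ∀ i, M.R w (f i)) → EloiseWins Λ M false (f (sel f)) φ ℓ :=
  ⟨fun h => by cases h with | dia_f _ _ _ _ sel h => exact ⟨sel, fun f hf => h f hf.1 hf.2⟩,
    fun ⟨sel, h⟩ => .dia_f w k φ ℓ sel fun f hf hR => h f ⟨hf, hR⟩⟩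

theorem eloiseWins_true_box_iff :
    EloiseWins Λ M true w (.box k φ) ℓ ↔ ∃ sel : (Fin k → W) → Fin k, ∀ f,
      (Injective f ∧ ∀ i, M.R w (f i)) → EloiseWins Λ M true (f (sel f)) φ ℓ :=
  ⟨fun h => by cases h with | box_v _ _ _ _ sel h => exact ⟨sel, fun f hf => h f hf.1 hf.2⟩,
    fun ⟨sel, h⟩ => .box_v w k φ ℓ sel fun f hf hR => h f ⟨hf, hR⟩⟩

theorem eloiseWins_false_box_iff :
    EloiseWins Λ M false w (.box k φ) ℓ ↔ ∃ f : Fin k → W,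
      (Injective f ∧ ∀ i, M.R w (f i)) ∧ ∀ i, EloiseWins Λ M false (f i) φ ℓ :=
  ⟨by rintro ⟨⟩; exact ⟨_, ⟨‹_›, ‹_›⟩, ‹_›⟩, fun ⟨f, ⟨hf, hR⟩, h⟩ => .box_f w k φ ℓ f hf hR h⟩

theorem eloiseWins_true_gdia_iff :
    EloiseWins Λ M true w (.gdia k φ) ℓ ↔ ∃ f : Fin k → W,
      Injective f ∧ ∀ i, EloiseWins Λ M true (f i) φ ℓ :=
  ⟨by rintro ⟨⟩; exact ⟨_, ‹_›, ‹_›⟩, fun ⟨f, hf, h⟩ => .gdia_v w k φ ℓ f hf h⟩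

theorem eloiseWins_false_gdia_iff :
    EloiseWins Λ M false w (.gdia k φ) ℓ ↔ ∃ sel : (Fin k → W) → Fin k, ∀ f,
      Injective f → EloiseWins Λ M false (f (sel f)) φ ℓ :=
  ⟨by rintro ⟨⟩; exact ⟨_, ‹_›⟩, fun ⟨sel, h⟩ => .gdia_f w k φ ℓ sel h⟩

theorem eloiseWins_true_gbox_iff :
    EloiseWins Λ M true w (.gbox k φ) ℓ ↔ ∃ sel : (Fin k → W) → Fin k, ∀ f,
      Injective f → EloiseWins Λ M true (f (sel f)) φ ℓ :=
  ⟨by rintro ⟨⟩; exact ⟨_, ‹_›⟩, fun ⟨sel, h⟩ => .gbox_v w k φ ℓ sel h⟩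

theorem eloiseWins_false_gbox_iff :
    EloiseWins Λ M false w (.gbox k φ) ℓ ↔ ∃ f : Fin k → W,
      Injective f ∧ ∀ i, EloiseWins Λ M false (f i) φ ℓ :=
  ⟨by rintro ⟨⟩; exact ⟨_, ‹_›, ‹_›⟩, fun ⟨f, hf, h⟩ => .gbox_f w k φ ℓ f hf h⟩

variable (Λ M) in
def GameCorrect (g : W → T → Prop) (ℓ : ℕ) (φ : Schema P T) : Prop :=
  ∀ b v, EloiseWins Λ M b v φ ℓ ↔ (Schema.Sat M g v φ ↔ b = true)

variable {g : W → T → Prop}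

theorem gameCorrect_top : GameCorrect Λ M g ℓ .top := fun b v => by
  simp [eloiseWins_top_iff, Schema.Sat]

theorem gameCorrect_bot : GameCorrect Λ M g ℓ .bot := fun b v => by
  cases b <;> simp [eloiseWins_bot_iff, Schema.Sat]

theorem gameCorrect_prop (p : P) : GameCorrect Λ M g ℓ (.prop p) := fun b v => by
  simp [eloiseWins_prop_iff, Schema.Sat]

theorem GameCorrect.neg (h : GameCorrect Λ M g ℓ φ) : GameCorrect Λ M g ℓ (.neg φ) := fun b v => by
  cases b <;> simp [eloiseWins_neg_iff, h _ v, Schema.Sat]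

theorem GameCorrect.and (hφ : GameCorrect Λ M g ℓ φ) (hψ : GameCorrect Λ M g ℓ ψ) :
    GameCorrect Λ M g ℓ (.and φ ψ) := by
  rintro (_ | _) v
  · simp [eloiseWins_false_and_iff, hφ _ v, hψ _ v, Schema.Sat, imp_iff_not_or]
  · simp [eloiseWins_true_and_iff, hφ _ v, hψ _ v, Schema.Sat]

theorem GameCorrect.or (hφ : GameCorrect Λ M g ℓ φ) (hψ : GameCorrect Λ M g ℓ ψ) :
    GameCorrect Λ M g ℓ (.or φ ψ) := by
  rintro (_ | _) v <;>
    simp [eloiseWins_true_or_iff, eloiseWins_false_or_iff, hφ _ v, hψ _ v, Schema.Sat]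

theorem GameCorrect.dia (h : GameCorrect Λ M g ℓ φ) (k : ℕ) : GameCorrect Λ M g ℓ (.dia k φ) := by
  rintro (_ | _) v
  · rw [eloiseWins_false_dia_iff]
    simp only [h false, Bool.false_eq_true, iff_false]
    rw [exists_selector_iff_not_exists _ (fun x => ¬Schema.Sat M g x φ) ?_]
    · simp [Schema.Sat, and_assoc, forall_and]
    · intro _ f; exact ⟨injective_of_subsingleton f, isEmptyElim⟩
  · simp [eloiseWins_true_dia_iff, h true, Schema.Sat, and_assoc, forall_and]

theorem GameCorrect.box (h : GameCorrect Λ M g ℓ φ) (k : ℕ) : GameCorrect Λ M g ℓ (.box k φ) := by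
  rintro (_ | _) v
  · simp [eloiseWins_false_box_iff, h false, Schema.Sat, and_assoc, forall_and]
  · rw [eloiseWins_true_box_iff]
    simp only [h true, iff_true]
    rw [exists_selector_iff_not_exists _ (Schema.Sat M g · φ) ?_]
    · simp [Schema.Sat, and_assoc, forall_and]
    · intro _ f; exact ⟨injective_of_subsingleton f, isEmptyElim⟩

theorem GameCorrect.gdia (h : GameCorrect Λ M g ℓ φ) (k : ℕ) :
    GameCorrect Λ M g ℓ (.gdia k φ) := by
  rintro (_ | _) v
  · rw [eloiseWins_false_gdia_iff]
    simp only [h false, Bool.false_eq_true, iff_false]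
    rw [exists_selector_iff_not_exists _ (fun x => ¬Schema.Sat M g x φ) ?_]
    · simp [Schema.Sat]
    · intro _ f; exact injective_of_subsingleton f
  · simp [eloiseWins_true_gdia_iff, h true, Schema.Sat]

theorem GameCorrect.gbox (h : GameCorrect Λ M g ℓ φ) (k : ℕ) :
    GameCorrect Λ M g ℓ (.gbox k φ) := by
  rintro (_ | _) v
  · simp [eloiseWins_false_gbox_iff, h false, Schema.Sat]
  · rw [eloiseWins_true_gbox_iff]
    simp only [h true, iff_true]
    rw [exists_selector_iff_not_exists _ (Schema.Sat M g · φ) ?_]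
    · simp [Schema.Sat]
    · intro _ f; exact injective_of_subsingleton f

theorem gameCorrect_of_vars (h : ∀ X ∈ ψ.vars, GameCorrect Λ M g ℓ (.var X)) :
    GameCorrect Λ M g ℓ ψ := by
  induction ψ with
  | bot => exact gameCorrect_bot
  | top => exact gameCorrect_top
  | prop p => exact gameCorrect_prop p
  | var X => exact h X rfl
  | neg φ ih => exact (ih h).neg
  | or φ ψ ihφ ihψ => exact (ihφ fun X hX => h X (.inl hX)).or (ihψ fun X hX => h X (.inr hX))
  | and φ ψ ihφ ihψ => exact (ihφ fun X hX => h X (.inl hX)).and (ihψ fun X hX => h X (.inr hX))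
  | dia k φ ih => exact (ih h).dia k
  | box k φ ih => exact (ih h).box k
  | gdia k φ ih => exact (ih h).gdia k
  | gbox k φ ih => exact (ih h).gbox k

theorem gameCorrect_ofFormula (φ : GGFormula P) : GameCorrect Λ M g ℓ (.ofFormula φ) :=
  gameCorrect_of_vars (by simp)

theorem gameCorrect_stage : ∀ k ψ, GameCorrect Λ M (Λ.stage M k) k ψ
  | 0, _ => gameCorrect_of_vars fun X _ b v => by
      rw [eloiseWins_var_zero_iff, gameCorrect_ofFormula _ b v]; rfl
  | k + 1, _ => gameCorrect_of_vars fun X _ b v => by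
      rw [eloiseWins_var_succ_iff, gameCorrect_stage k _ b v]; rfl

end Game

/-- Key inductive lemma for semantic game correctness: for
every subschema `ψ` of a GGMSC program `Λ`, every pointed model `(M,w)` and
every `k`, we have `M,w ⊨ ψ^k` (i.e. `ψ` holds at `w` when the schema
variables are interpreted by the round-`k` global configuration, which is the
semantics of the `k`-th iterated formula of `ψ`) iff Eloise has a winning
strategy in `𝒢(M,w,Λ)` from the position `(Eloise, w, ψ, k)`. -/
theorem ggmsc_semantic_game_key_lemma {W P T : Type} (Λ : Program P T)
    (M : Kripke W P) (ψ : Schema P T) (w : W) (k : ℕ) :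
    Schema.Sat M (Λ.stage M k) w ψ ↔ EloiseWins Λ M true w ψ k :=
  ((gameCorrect_stage k ψ true w).trans (iff_true_right rfl)).symm
end

section
/- The MSC program with rules X(0) :- □⊥ and X :- ◇X ∧ □X, with accepting predicate X, accepts a pointed Kripke model (M,w) if and only if (M,w) has the centre-point property: there exists n ∈ ℕ such that every walk starting from w reaches, in exactly n steps, a node with no successors. -/
/-- The MSC program `X(0) :- □⊥`, `X :- ◇X ∧ □X` with accepting predicate `X`.
Here `□⊥` is `□_{<1}⊥`, `◇` is `◇_{≥1}` and `□` is `□_{<1}`. -/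
def centreProgram (P : Type) : Program P Unit where
  base := fun _ => .box 1 .bot
  rule := fun _ => .and (.dia 1 (.var ())) (.box 1 (.var ()))
  acc := Set.univ

/-- The centre-point property: there is an `n` such that a walk of length `m`
starting at `w` ends in a node with no successors iff `m = n`; i.e. every
(maximal) walk starting from `w` leads to a dead-end in exactly `n` steps. -/
def CentrePoint {W P : Type} (M : Kripke W P) (w : W) : Prop :=
  ∃ n : ℕ, ∀ (m : ℕ) (v : ℕ → W), v 0 = w → (∀ i < m, M.R (v i) (v (i + 1))) →
    ((∀ u : W, ¬ M.R (v m) u) ↔ m = n)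

/-!
`X^n` holds at `w` exactly when `w` is a dead end (for `n = 0`), or when `w` has a successor
and `X^(n-1)` holds at all of them. The property "every walk from `w` stops at a dead end
precisely after `n` steps" obeys the same recursion in `n`, by splitting a walk of positive
length into its first edge and the walk from the second node; so the two agree for every `n`.
-/

theorem exists_injective_fin_one_iff {α : Type*} {p : α → Prop} :
    (∃ f : Fin 1 → α, Function.Injective f ∧ ∀ i, p (f i)) ↔ ∃ a, p a :=
  ⟨fun ⟨f, _, hf⟩ => ⟨f 0, hf 0⟩,
    fun ⟨a, ha⟩ => ⟨fun _ => a, Function.injective_of_subsingleton _, fun _ => ha⟩⟩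

namespace Schema

variable {W P T : Type} {M : Kripke W P} {g : W → T → Prop} {w : W} {φ : Schema P T}

theorem sat_dia_one : Sat M g w (.dia 1 φ) ↔ ∃ u, M.R w u ∧ Sat M g u φ :=
  exists_injective_fin_one_iff (p := fun u => M.R w u ∧ Sat M g u φ)

theorem sat_box_one : Sat M g w (.box 1 φ) ↔ ∀ u, M.R w u → Sat M g u φ := by
  rw [Sat, exists_injective_fin_one_iff (p := fun u => M.R w u ∧ ¬ Sat M g u φ)]
  simp only [not_exists, not_and, not_not]

end Schema

namespace Kripke

variable {W P : Type} (M : Kripke W P)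

def IsDeadEnd (w : W) : Prop := ∀ u, ¬ M.R w u

def IsCentreAtDepth (n : ℕ) (w : W) : Prop :=
  ∀ (m : ℕ) (v : ℕ → W), v 0 = w → (∀ i < m, M.R (v i) (v (i + 1))) →
    (M.IsDeadEnd (v m) ↔ m = n)

variable {M}

theorem centrePoint_iff_exists_isCentreAtDepth {w : W} :
    CentrePoint M w ↔ ∃ n, M.IsCentreAtDepth n w :=
  Iff.rfl

theorem IsCentreAtDepth.isDeadEnd_iff {n : ℕ} {w : W} (h : M.IsCentreAtDepth n w) :
    M.IsDeadEnd w ↔ 0 = n :=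
  h 0 (fun _ => w) rfl fun _ hi => absurd hi (Nat.not_lt_zero _)

theorem isCentreAtDepth_zero_iff {w : W} : M.IsCentreAtDepth 0 w ↔ M.IsDeadEnd w := by
  refine ⟨fun h => h.isDeadEnd_iff.mpr rfl, fun hw m v hv0 hv => ?_⟩
  cases m with
  | zero => simpa [hv0] using hw
  | succ k => exact absurd (hv0 ▸ hv 0 k.succ_pos) (hw _)

theorem isCentreAtDepth_succ_iff {n : ℕ} {w : W} :
    M.IsCentreAtDepth (n + 1) w ↔
      (∃ u, M.R w u) ∧ ∀ u, M.R w u → M.IsCentreAtDepth n u := by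
  constructor
  · intro h
    have hlive : ¬ M.IsDeadEnd w := fun hd => absurd (h.isDeadEnd_iff.mp hd) n.succ_ne_zero.symm
    refine ⟨by simpa [IsDeadEnd] using hlive, fun u hu m v hv0 hv => ?_⟩
    have hwalk : ∀ i < m + 1, M.R (Stream'.cons w v i) (Stream'.cons w v (i + 1)) := by
      rintro (_ | i) hi
      · exact show M.R w (v 0) from hv0 ▸ hu
      · exact hv i (by omega)
    exact (h (m + 1) (Stream'.cons w v) rfl hwalk).trans (by omega)
  · rintro ⟨⟨u, hu⟩, hsucc⟩ m v hv0 hv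
    cases m with
    | zero => exact iff_of_false (fun hd => hd u (hv0 ▸ hu)) (by omega)
    | succ k =>
      have hstep : M.R w (v 1) := hv0 ▸ hv 0 k.succ_pos
      exact (hsucc _ hstep k (fun i => v (i + 1)) rfl fun i hi => hv (i + 1) (by omega)).trans
        (by omega)

end Kripke

namespace centreProgram

variable {W P : Type} {M : Kripke W P}

theorem stage_zero_iff {w : W} : (centreProgram P).stage M 0 w () ↔ M.IsDeadEnd w := by
  change Schema.Sat M _ w (.box 1 .bot) ↔ _
  rw [Schema.sat_box_one]
  simp [Schema.Sat, Kripke.IsDeadEnd]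

theorem stage_succ_iff {n : ℕ} {w : W} :
    (centreProgram P).stage M (n + 1) w () ↔
      (∃ u, M.R w u) ∧ ∀ u, M.R w u → (centreProgram P).stage M n u () := by
  change Schema.Sat M _ w (.and (.dia 1 (.var ())) (.box 1 (.var ()))) ↔ _
  rw [Schema.Sat, Schema.sat_dia_one, Schema.sat_box_one]
  exact ⟨fun ⟨⟨u, hu, _⟩, hall⟩ => ⟨⟨u, hu⟩, hall⟩, fun ⟨⟨u, hu⟩, hall⟩ => ⟨⟨u, hu, hall u hu⟩, hall⟩⟩

theorem stage_iff_isCentreAtDepth (n : ℕ) (w : W) :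
    (centreProgram P).stage M n w () ↔ M.IsCentreAtDepth n w := by
  induction n generalizing w with
  | zero => rw [stage_zero_iff, Kripke.isCentreAtDepth_zero_iff]
  | succ n ih => simp only [stage_succ_iff, Kripke.isCentreAtDepth_succ_iff, ih]

end centreProgram

/-- The MSC program `X(0) :- □⊥`, `X :- ◇X ∧ □X` accepts a
pointed Kripke model `(M,w)` iff `(M,w)` has the centre-point property. -/
theorem centre_program_accepts_iff_centre_point {W P : Type}
    (M : Kripke W P) (w : W) :
    (centreProgram P).Accepts M w ↔ CentrePoint M w := by
  rw [Program.Accepts, Kripke.centrePoint_iff_exists_isCentreAtDepth]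
  refine exists_congr fun n => ?_
  rw [← centreProgram.stage_iff_isCentreAtDepth]
  exact ⟨fun ⟨(), _, h⟩ => h, fun h => ⟨(), Set.mem_univ _, h⟩⟩
end
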